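/- Stabilization: with 𝒞_k defined by 𝒞_0(z) = 𝔠(z) and 𝒞_{k+1}(z) = [(𝔠(z) + y_k/z)𝒞_k(z)]_+, one has 𝒞_k(0)(y_0,...,y_{k−1}) = 𝒞_{k+1}(0)(y_0,...,y_{k−1}, y_k = 0) for all k ≥ 0; i.e., the constant term of 𝒞_{k+1} in z, with its last variable set to zero, recovers the constant term of 𝒞_k. -/

import Mathlib

/-- The nonnegative-degree part of z⁻¹·f: `plusDiv f = [f/z]_+`. -/
noncomputable def plusDiv {A : Type*} [CommRing A] (f : PowerSeries A) : PowerSeries A :=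
  PowerSeries.mk fun n => PowerSeries.coeff (R := A) (n + 1) f

/-!
The constant term of `𝒞_{k+1} = 𝔠 𝒞_k + y_k [𝒞_k / z]_+` is `𝔠(0) 𝒞_k(0) + y_k [z¹]𝒞_k`, and
`𝔠(0) = 1`. Every coefficient of `𝔠` is a constant (`𝔠 = 1 - z 𝔠²` determines it recursively),
so by induction the coefficients of `𝒞_k` involve only `y_0, …, y_{k-1}`; hence setting `y_k = 0`
kills the second summand and leaves `𝒞_k(0)` unchanged.
-/

theorem coeff_plusDiv {A : Type*} [CommRing A] (f : PowerSeries A) (n : ℕ) :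
    PowerSeries.coeff n (plusDiv f) = PowerSeries.coeff (n + 1) f :=
  PowerSeries.coeff_mk _ _

namespace PowerSeries

variable {R : Type*} [CommRing R] {c : PowerSeries R}

theorem constantCoeff_eq_one_of_X_mul_sq_add_sub_one_eq_zero (h : X * c ^ 2 + c - 1 = 0) :
    constantCoeff c = 1 := by
  simpa [sub_eq_zero] using congrArg constantCoeff h

theorem coeff_succ_eq_neg_coeff_sq_of_X_mul_sq_add_sub_one_eq_zero
    (h : X * c ^ 2 + c - 1 = 0) (n : ℕ) : coeff (n + 1) c = -coeff n (c ^ 2) := by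
  have hn := congrArg (coeff (n + 1)) h
  simp only [map_sub, map_add, coeff_succ_X_mul, coeff_one, Nat.succ_ne_zero, if_false,
    sub_zero, map_zero] at hn
  exact eq_neg_of_add_eq_zero_right hn

theorem coeff_mem_of_X_mul_sq_add_sub_one_eq_zero {S : Type*} [SetLike S R] [SubringClass S R]
    (s : S) (h : X * c ^ 2 + c - 1 = 0) (n : ℕ) : coeff n c ∈ s := by
  induction n using Nat.strong_induction_on with
  | _ n ih =>
    cases n with
    | zero =>
      rw [coeff_zero_eq_constantCoeff_apply,
        constantCoeff_eq_one_of_X_mul_sq_add_sub_one_eq_zero h]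
      exact one_mem s
    | succ n =>
      rw [coeff_succ_eq_neg_coeff_sq_of_X_mul_sq_add_sub_one_eq_zero h, sq, coeff_mul]
      refine neg_mem (sum_mem fun p hp => mul_mem (ih p.1 ?_) (ih p.2 ?_)) <;>
        · rw [Finset.HasAntidiagonal.mem_antidiagonal] at hp
          omega

end PowerSeries

namespace MvPolynomial

variable {R σ : Type*} [CommRing R]

theorem aeval_eq_self_of_mem_supported {s : Set σ} {f : σ → MvPolynomial σ R}
    {p : MvPolynomial σ R} (hp : p ∈ supported R s) (hf : ∀ i ∈ s, f i = X i) :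
    aeval f p = p :=
  calc aeval f p = aeval X p :=
        eval₂Hom_congr' rfl (fun i hi _ => hf i (mem_supported.1 hp hi)) rfl
    _ = p := aeval_X_left_apply p

theorem coeff_mem_supported_Iio {c : PowerSeries (MvPolynomial ℕ R)}
    (hc : ∀ n, PowerSeries.coeff n c ∈ supported R ∅) {C : ℕ → PowerSeries (MvPolynomial ℕ R)}
    (hC0 : C 0 = c)
    (hrec : ∀ k : ℕ, C (k + 1) = c * C k + PowerSeries.C (X k) * plusDiv (C k)) (k n : ℕ) :
    PowerSeries.coeff n (C k) ∈ supported R (Set.Iio k) := by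
  induction k generalizing n with
  | zero => simpa [hC0] using hc n
  | succ k ih =>
    have hmono : supported R (Set.Iio k) ≤ supported R (Set.Iio (k + 1)) :=
      supported_mono (Set.Iio_subset_Iio k.le_succ)
    rw [hrec k, map_add, PowerSeries.coeff_mul, PowerSeries.coeff_C_mul, coeff_plusDiv]
    refine add_mem (sum_mem fun p _ => mul_mem ?_ (hmono (ih p.2)))
      (mul_mem ?_ (hmono (ih (n + 1))))
    · exact supported_mono (Set.empty_subset _) (hc p.1)
    · exact Algebra.subset_adjoin ⟨k, k.lt_succ_self, rfl⟩

end MvPolynomial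

theorem generating_function_stabilization_general
    (c : PowerSeries (MvPolynomial ℕ ℚ))
    (hceq : PowerSeries.X * c ^ 2 + c - 1 = 0)
    (C : ℕ → PowerSeries (MvPolynomial ℕ ℚ))
    (hC0 : C 0 = c)
    (hrec : ∀ k : ℕ, C (k + 1) =
      c * C k + PowerSeries.C (R := MvPolynomial ℕ ℚ) (MvPolynomial.X k) * plusDiv (C k))
    (k : ℕ) :
    MvPolynomial.aeval
        (fun n : ℕ => if n = k then 0 else (MvPolynomial.X n : MvPolynomial ℕ ℚ))
        (PowerSeries.constantCoeff (R := MvPolynomial ℕ ℚ) (C (k + 1))) =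
      PowerSeries.constantCoeff (R := MvPolynomial ℕ ℚ) (C k) := by
  have hCk : PowerSeries.constantCoeff (C k) ∈ MvPolynomial.supported ℚ (Set.Iio k) := by
    simpa using MvPolynomial.coeff_mem_supported_Iio
      (PowerSeries.coeff_mem_of_X_mul_sq_add_sub_one_eq_zero _ hceq) hC0 hrec k 0
  rw [hrec k, map_add, map_mul, map_mul, PowerSeries.constantCoeff_C,
    PowerSeries.constantCoeff_eq_one_of_X_mul_sq_add_sub_one_eq_zero hceq, one_mul, map_add,
    map_mul, MvPolynomial.aeval_X, if_pos rfl, zero_mul, add_zero]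
  exact MvPolynomial.aeval_eq_self_of_mem_supported hCk fun i hi => if_neg (ne_of_lt hi)

/-- Stabilization: with 𝒞₀(z) = 𝔠(z) and 𝒞_{k+1}(z) = [(𝔠(z) + y_k/z)𝒞_k(z)]_+,
the constant term (in z) of 𝒞_{k+1}, with its last variable y_k set to zero,
recovers the constant term of 𝒞_k. -/
theorem generating_function_stabilization
    (c : PowerSeries (MvPolynomial ℕ ℚ))
    (hceq : PowerSeries.X * c ^ 2 + c - 1 = 0)
    (hc0 : PowerSeries.constantCoeff (R := MvPolynomial ℕ ℚ) c = 1)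
    (C : ℕ → PowerSeries (MvPolynomial ℕ ℚ))
    (hC0 : C 0 = c)
    (hrec : ∀ k : ℕ, C (k + 1) =
      c * C k + PowerSeries.C (R := MvPolynomial ℕ ℚ) (MvPolynomial.X k) * plusDiv (C k))
    (k : ℕ) :
    MvPolynomial.aeval
        (fun n : ℕ => if n = k then 0 else (MvPolynomial.X n : MvPolynomial ℕ ℚ))
        (PowerSeries.constantCoeff (R := MvPolynomial ℕ ℚ) (C (k + 1))) =
      PowerSeries.constantCoeff (R := MvPolynomial ℕ ℚ) (C k) :=
  generating_function_stabilization_general c hceq C hC0 hrec k
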